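/- arXiv:1510.05991 — 3 statements merged into one kernel-verified Lean document; each statement's English description precedes it below -/
import Mathlib

section
/- Let X ⊆ F₂ⁿ with |X| = k ≥ 1 and |X + X| = l. If f : X → F₂ʳ is a Freĭman isomorphism onto its image and the image f(X) is not contained in any proper affine subspace of F₂ʳ, then r ≤ log k + 2l/k. -/
open Finset Pointwise

/-- `Vec n` is the vector space `F₂ⁿ`. -/
abbrev Vec (n : ℕ) : Type := Fin n → ZMod 2


section Helpers

variable {M : Type} [AddCommGroup M] [Module (ZMod 2) M]

lemma char2_add_self (x : M) : x + x = 0 := by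
  have h1 : ((2 : ℕ) : ZMod 2) • x = (2 : ℕ) • x := Nat.cast_smul_eq_nsmul _ _ _
  have h2 : ((2 : ℕ) : ZMod 2) = 0 := by decide
  rw [h2, zero_smul, two_nsmul] at h1
  exact h1.symm

lemma char2_sub_eq_add (x y : M) : x - y = x + y := by
  rw [sub_eq_iff_eq_add]
  rw [add_assoc, char2_add_self, add_zero]

lemma mem_image_addv [DecidableEq M] (Y : Finset M) (v x : M) :
    x ∈ Y.image (· + v) ↔ x + v ∈ Y := by
  simp only [Finset.mem_image]
  constructor
  · rintro ⟨y, hy, rfl⟩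
    rwa [add_assoc, char2_add_self, add_zero]
  · intro h
    exact ⟨x + v, h, by rw [add_assoc, char2_add_self, add_zero]⟩

lemma two_to_one [DecidableEq M] {v : M} (hv : v ≠ 0) (S : Finset M)
    (hS : ∀ x ∈ S, x + v ∈ S) :
    letI : DecidableEq (M ⧸ Submodule.span (ZMod 2) {v}) := Classical.decEq _
    S.card = 2 * (S.image (Submodule.mkQ (Submodule.span (ZMod 2) {v}))).card := by
  letI : DecidableEq (M ⧸ Submodule.span (ZMod 2) {v}) := Classical.decEq _
  set φ := Submodule.mkQ (Submodule.span (ZMod 2) {v}) with hφ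
  have hfib : ∀ x y : M, φ x = φ y ↔ (x = y ∨ x = y + v) := by
    intro x y
    constructor
    · intro h
      have : x - y ∈ Submodule.span (ZMod 2) {v} := by
        rwa [hφ, Submodule.mkQ_apply, Submodule.mkQ_apply, Submodule.Quotient.eq] at h
      rw [Submodule.mem_span_singleton] at this
      obtain ⟨a, ha⟩ := this
      have hxy : x + y = a • v := by rw [← char2_sub_eq_add]; exact ha.symm
      rcases (show ∀ b : ZMod 2, b = 0 ∨ b = 1 by decide) a with rfl | rfl
      · left
        have h0 : x + y = 0 := by rw [hxy, zero_smul]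
        calc x = (x + y) + y := by rw [add_assoc, char2_add_self, add_zero]
        _ = y := by rw [h0, zero_add]
      · right
        have h0 : x + y = v := by rw [hxy, one_smul]
        calc x = (x + y) + y := by rw [add_assoc, char2_add_self, add_zero]
        _ = y + v := by rw [h0, add_comm]
    · rintro (rfl | rfl)
      · rfl
      · have : φ (y + v) = φ y + φ v := map_add _ _ _
        have hv0 : φ v = 0 := by
          simp [hφ, Submodule.Quotient.mk_eq_zero, Submodule.mem_span_singleton_self]
        rw [this, hv0, add_zero]
  rw [Finset.card_eq_sum_card_image φ S]
  rw [Finset.sum_congr rfl (g := fun _ => 2), Finset.sum_const, smul_eq_mul, mul_comm]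
  intro b hb
  obtain ⟨x, hxS, rfl⟩ := Finset.mem_image.mp hb
  have : S.filter (fun a => φ a = φ x) = {x, x + v} := by
    ext y
    simp only [Finset.mem_filter, Finset.mem_insert, Finset.mem_singleton]
    constructor
    · rintro ⟨-, h⟩
      exact (hfib y x).mp h
    · rintro (rfl | rfl)
      · exact ⟨hxS, rfl⟩
      · exact ⟨hS x hxS, ((hfib (x+v) x).mpr (Or.inr rfl))⟩
  rw [this, Finset.card_insert_of_notMem, Finset.card_singleton]
  simp only [Finset.mem_singleton]
  intro h
  exact hv (by simpa using h.symm)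

end Helpers

lemma numIneq (k l δ : ℝ) (hk : 2 ≤ k) (hkl : k ≤ l) (hδ : 0 < δ) (hkey : 2*l*δ ≤ k^2) :
    1 + Real.logb 2 (k - δ) + 2*(l - k + δ)/(k - δ) ≤ Real.logb 2 k + 2*l/k := by
  have hk0 : (0:ℝ) < k := by linarith
  have hl0 : (0:ℝ) < l := by linarith
  have h2δk : 2*δ ≤ k := by nlinarith
  have hkδ : (0:ℝ) < k - δ := by linarith
  set t := δ/(k-δ) with ht
  have ht0 : 0 < t := div_pos hδ hkδ
  have ht1 : t ≤ 1 := by rw [div_le_one hkδ]; linarith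
  -- 2^t ≤ 1 + t via convexity of exp
  have hconv : Real.exp (t * Real.log 2) ≤ 1 + t := by
    have h := convexOn_exp.2 (Set.mem_univ (0:ℝ)) (Set.mem_univ (Real.log 2))
      (by linarith : (0:ℝ) ≤ 1 - t) (le_of_lt ht0) (by ring)
    simp only [smul_eq_mul, mul_zero, zero_add, Real.exp_zero, mul_one,
      Real.exp_log (by norm_num : (0:ℝ) < 2)] at h
    calc Real.exp (t * Real.log 2) ≤ 1 - t + t * 2 := h
    _ = 1 + t := by ring
  have hlog : t * Real.log 2 ≤ Real.log (1 + t) := by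
    have := Real.log_le_log (Real.exp_pos _) hconv
    rwa [Real.log_exp] at this
  have hlogb : t ≤ Real.logb 2 (1 + t) := by
    rw [Real.logb, le_div_iff₀ (Real.log_pos (by norm_num))]
    linarith
  have hquot : k/(k-δ) = 1 + t := by
    rw [ht]
    field_simp
    ring
  have hsplit : Real.logb 2 k - Real.logb 2 (k - δ) = Real.logb 2 (1 + t) := by
    rw [← hquot, Real.logb_div (ne_of_gt hk0) (ne_of_gt hkδ)]
  have harith : 1 + 2*(l - k + δ)/(k - δ) - 2*l/k ≤ t := by
    have key : δ/(k-δ) + 2*l/k - (1 + 2*(l - k + δ)/(k - δ)) = (k^2 - 2*l*δ)/(k*(k-δ)) := by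
      field_simp
      ring
    rw [← ht] at key
    have : (0:ℝ) ≤ (k^2 - 2*l*δ)/(k*(k-δ)) :=
      div_nonneg (by linarith) (by positivity)
    linarith
  linarith [hlogb, hsplit.symm.le, hsplit.le]


lemma main_lemma (n : ℕ) : ∀ (M : Type) [AddCommGroup M] [Module (ZMod 2) M]
    [DecidableEq M] [FiniteDimensional (ZMod 2) M],
    Module.finrank (ZMod 2) M = n →
    ∀ Y : Finset M, (0:M) ∈ Y → Submodule.span (ZMod 2) (Y : Set M) = ⊤ →
    (n : ℝ) ≤ Real.logb 2 Y.card + 2 * (Y+Y).card / Y.card := by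
  induction n with
  | zero =>
    intro M _ _ _ _ _ Y h0Y _
    have hk : 1 ≤ Y.card := Finset.card_pos.mpr ⟨0, h0Y⟩
    have h1 : (0:ℝ) ≤ Real.logb 2 Y.card :=
      Real.logb_nonneg (by norm_num) (by exact_mod_cast hk)
    have h2 : (0:ℝ) ≤ 2 * (Y+Y).card / Y.card := by positivity
    push_cast
    linarith
  | succ n ih =>
    intro M _ _ _ _ hrank Y h0Y hspan
    letI : DecidableEq (M ⧸ Submodule.span (ZMod 2) {(0:M)}) := Classical.decEq _
    set k := Y.card with hk
    set l := (Y+Y).card with hl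
    have hkpos : 0 < k := Finset.card_pos.mpr ⟨0, h0Y⟩
    -- k ≥ 2
    have hk2 : 2 ≤ k := by
      by_contra hcon
      have hk1 : k = 1 := by omega
      obtain ⟨y, hy⟩ := Finset.card_eq_one.mp hk1
      have h0y : (0:M) = y := by rw [hy] at h0Y; simpa using h0Y
      rw [hy, ← h0y] at hspan
      have hbot : Submodule.span (ZMod 2) ({0} : Set M) = ⊥ := Submodule.span_zero_singleton _
      rw [Finset.coe_singleton, hbot] at hspan
      have : Module.finrank (ZMod 2) M = 0 := by
        haveI : Subsingleton M := by
          constructor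
          intro a b
          have ha : a ∈ (⊥ : Submodule (ZMod 2) M) := hspan ▸ Submodule.mem_top
          have hb : b ∈ (⊥ : Submodule (ZMod 2) M) := hspan ▸ Submodule.mem_top
          rw [Submodule.mem_bot] at ha hb
          rw [ha, hb]
        exact Module.finrank_zero_of_subsingleton
      omega
    have hYsub : Y ⊆ Y + Y := fun x hx => Finset.mem_add.mpr ⟨x, hx, 0, h0Y, add_zero x⟩
    have hlk : k ≤ l := Finset.card_le_card hYsub
    have h0YY : (0:M) ∈ Y + Y := hYsub h0Y
    -- the collision counting function
    set c : M → ℕ := fun v => (Y ∩ Y.image (· + v)).card with hc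
    have hcfilter : ∀ v, c v = (Y.filter (fun x => x + v ∈ Y)).card := by
      intro v
      have : Y ∩ Y.image (· + v) = Y.filter (fun x => x + v ∈ Y) := by
        ext x
        simp only [Finset.mem_inter, Finset.mem_filter, mem_image_addv]
      simp only [hc]
      rw [this]
    -- sum identity
    have hsum : ∑ v ∈ (Y+Y), c v = k * k := by
      calc ∑ v ∈ (Y+Y), c v
          = ∑ v ∈ (Y+Y), ∑ x ∈ Y, (if x + v ∈ Y then 1 else 0) := by
            refine Finset.sum_congr rfl fun v _ => ?_
            rw [hcfilter v, Finset.card_filter]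
        _ = ∑ x ∈ Y, ∑ v ∈ (Y+Y), (if x + v ∈ Y then 1 else 0) := Finset.sum_comm
        _ = ∑ x ∈ Y, k := by
            refine Finset.sum_congr rfl fun x hx => ?_
            rw [← Finset.card_filter]
            have heq : (Y+Y).filter (fun v => x + v ∈ Y) = Y.image (x + ·) := by
              ext w
              simp only [Finset.mem_filter, Finset.mem_image]
              constructor
              · rintro ⟨hw, hxw⟩
                exact ⟨x + w, hxw, by rw [← add_assoc, char2_add_self, zero_add]⟩
              · rintro ⟨y, hy, rfl⟩
                refine ⟨Finset.mem_add.mpr ⟨x, hx, y, hy, rfl⟩, ?_⟩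
                rwa [← add_assoc, char2_add_self, zero_add]
            rw [heq, Finset.card_image_of_injective _ (add_right_injective x)]
        _ = k * k := by rw [Finset.sum_const, smul_eq_mul]
    have hc0 : c 0 = k := by
      simp only [hc]
      have : Y.image (· + (0:M)) = Y := by simp
      rw [this, Finset.inter_self]
    -- pick v minimizing c on (Y+Y) \ {0}
    set T := (Y+Y).erase 0 with hT
    have h1l : 1 ≤ l := Nat.le_trans hkpos hlk
    have hTcard : T.card + 1 = l := by
      rw [hT, Finset.card_erase_of_mem h0YY, ← hl]
      exact Nat.sub_add_cancel h1l
    have hTne : T.Nonempty := by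
      obtain ⟨y, hyY, hy0⟩ := Finset.exists_mem_ne (by rw [← hk]; exact hk2) (0:M)
      exact ⟨y, Finset.mem_erase.mpr ⟨hy0, hYsub hyY⟩⟩
    obtain ⟨v, hvT, hvmin⟩ := Finset.exists_min_image T c hTne
    have hv0 : v ≠ 0 := (Finset.mem_erase.mp hvT).1
    have hvYY : v ∈ Y + Y := (Finset.mem_erase.mp hvT).2
    have hsumT : ∑ w ∈ T, c w + k = k * k := by
      have h2 : ∑ w ∈ T, c w + c 0 = k * k := by
        rw [hT, Finset.sum_erase_add _ _ h0YY]
        exact hsum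
      rwa [hc0] at h2
    have hpigeon : T.card * c v ≤ ∑ w ∈ T, c w := by
      have := Finset.card_nsmul_le_sum T c (c v) hvmin
      simpa [smul_eq_mul] using this
    have hcvk : c v ≤ k := Finset.card_le_card (Finset.inter_subset_left)
    have hlcv : l * c v ≤ k * k := by
      have h1 : l * c v = T.card * c v + c v := by
        rw [← hTcard]; ring
      linarith [hpigeon, hsumT, hcvk]
    obtain ⟨a, ha, b, hb, hab⟩ := Finset.mem_add.mp hvYY
    have hcv1 : 1 ≤ c v := by
      refine Finset.card_pos.mpr ⟨a, Finset.mem_inter.mpr ⟨ha, ?_⟩⟩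
      rw [mem_image_addv]
      have : a + v = b := by rw [← hab, ← add_assoc, char2_add_self, zero_add]
      rwa [this]
    -- quotient setup
    set N := Submodule.span (ZMod 2) {v} with hN
    set φ := Submodule.mkQ N with hφ
    letI : DecidableEq (M ⧸ N) := Classical.decEq _
    have hrankQ : Module.finrank (ZMod 2) (M ⧸ N) = n := by
      have h1 := Submodule.finrank_quotient_add_finrank N
      rw [finrank_span_singleton hv0] at h1
      omega
    have hφv : φ v = 0 := by
      rw [hφ, Submodule.mkQ_apply, Submodule.Quotient.mk_eq_zero]
      exact Submodule.mem_span_singleton_self v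
    set Y' := Y.image φ with hY'
    have h0Y' : (0 : M ⧸ N) ∈ Y' := Finset.mem_image.mpr ⟨0, h0Y, map_zero φ⟩
    have hspan' : Submodule.span (ZMod 2) (Y' : Set (M ⧸ N)) = ⊤ := by
      rw [hY', Finset.coe_image, Submodule.span_image, hspan, Submodule.map_top,
        Submodule.range_mkQ]
    -- δ
    set P := Y ∩ Y.image (· + v) with hP
    have hPclosed : ∀ x ∈ P, x + v ∈ P := by
      intro x hx
      rw [hP, Finset.mem_inter, mem_image_addv] at hx ⊢
      rw [add_assoc, char2_add_self, add_zero]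
      exact ⟨hx.2, hx.1⟩
    set δ := (P.image φ).card with hδ
    have hcδ : c v = 2 * δ := two_to_one hv0 P hPclosed
    have hδ1 : 1 ≤ δ := by omega
    -- card of Y'
    have himgv : ∀ S : Finset M, (S.image (· + v)).image φ = S.image φ := by
      intro S
      rw [Finset.image_image]
      refine Finset.image_congr fun x _ => ?_
      simp only [Function.comp_apply]
      rw [map_add, hφv, add_zero]
    set U := Y ∪ Y.image (· + v) with hU
    have hUclosed : ∀ x ∈ U, x + v ∈ U := by
      intro x hx
      rw [hU, Finset.mem_union, mem_image_addv] at hx ⊢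
      rcases hx with hx | hx
      · right; rwa [add_assoc, char2_add_self, add_zero]
      · left; exact hx
    have hU2 : U.card = 2 * (U.image φ).card := two_to_one hv0 U hUclosed
    have hUimg : U.image φ = Y' := by
      rw [hU, Finset.image_union, himgv, hY', Finset.union_self]
    have hUcard : U.card + c v = 2 * k := by
      have h2 := Finset.card_union_add_card_inter Y (Y.image (· + v))
      rw [Finset.card_image_of_injective _ (add_left_injective v), ← hU, ← hk,
        ← two_mul] at h2
      have h3 : c v = (Y ∩ Y.image (· + v)).card := rfl
      rw [h3]
      exact h2
    have hY'k : Y'.card + δ = k := by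
      rw [hUimg] at hU2
      omega
    -- card of the image of Y+Y
    set Q := (Y+Y) ∩ (Y+Y).image (· + v) with hQ
    have hQclosed : ∀ x ∈ Q, x + v ∈ Q := by
      intro x hx
      rw [hQ, Finset.mem_inter, mem_image_addv] at hx ⊢
      rw [add_assoc, char2_add_self, add_zero]
      exact ⟨hx.2, hx.1⟩
    set σ := (Q.image φ).card with hσ
    have hQ2 : Q.card = 2 * σ := two_to_one hv0 Q hQclosed
    set W := (Y+Y) ∪ (Y+Y).image (· + v) with hW
    have hWclosed : ∀ x ∈ W, x + v ∈ W := by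
      intro x hx
      rw [hW, Finset.mem_union, mem_image_addv] at hx ⊢
      rcases hx with hx | hx
      · right; rwa [add_assoc, char2_add_self, add_zero]
      · left; exact hx
    have hW2 : W.card = 2 * (W.image φ).card := two_to_one hv0 W hWclosed
    have hWimg : W.image φ = (Y+Y).image φ := by
      rw [hW, Finset.image_union, himgv, Finset.union_self]
    have hWcard : W.card + Q.card = 2 * l := by
      have := Finset.card_union_add_card_inter (Y+Y) ((Y+Y).image (· + v))
      rwa [Finset.card_image_of_injective _ (add_left_injective v), ← hW, ← hQ, ← hl,
        ← two_mul] at this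
    have hYYimg : ((Y+Y).image φ).card + σ = l := by
      rw [hWimg] at hW2
      omega
    -- lower bound for σ : σ + δ ≥ k
    have hA1A2 : (Y.image (· + a)) ∩ (Y.image (· + b)) = P.image (· + b) := by
      ext x
      rw [Finset.mem_inter, mem_image_addv, mem_image_addv, mem_image_addv, hP,
        Finset.mem_inter, mem_image_addv]
      have hxbv : x + b + v = x + a := by
        rw [← hab]
        calc x + b + (a + b) = x + a + (b + b) := by abel
        _ = x + a := by rw [char2_add_self, add_zero]
      rw [hxbv]
      tauto
    have hA1A2card : ((Y.image (· + a)) ∩ (Y.image (· + b))).card = c v := by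
      rw [hA1A2, Finset.card_image_of_injective _ (add_left_injective b)]
    have hAunion : ((Y.image (· + a)) ∪ (Y.image (· + b))).card + c v = 2 * k := by
      have := Finset.card_union_add_card_inter (Y.image (· + a)) (Y.image (· + b))
      rwa [hA1A2card, Finset.card_image_of_injective _ (add_left_injective a),
        Finset.card_image_of_injective _ (add_left_injective b), ← hk, ← two_mul] at this
    have hAsub : (Y.image (· + a)) ∪ (Y.image (· + b)) ⊆ Q := by
      intro x hx
      rw [Finset.mem_union] at hx
      rw [hQ, Finset.mem_inter, mem_image_addv]
      rcases hx with hx | hx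
      · rw [Finset.mem_image] at hx
        obtain ⟨y, hy, rfl⟩ := hx
        constructor
        · exact Finset.mem_add.mpr ⟨y, hy, a, ha, rfl⟩
        · have : y + a + v = y + b := by
            rw [← hab]
            calc y + a + (a + b) = y + b + (a + a) := by abel
            _ = y + b := by rw [char2_add_self, add_zero]
          rw [this]
          exact Finset.mem_add.mpr ⟨y, hy, b, hb, rfl⟩
      · rw [Finset.mem_image] at hx
        obtain ⟨y, hy, rfl⟩ := hx
        constructor
        · exact Finset.mem_add.mpr ⟨y, hy, b, hb, rfl⟩
        · have : y + b + v = y + a := by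
            rw [← hab]
            calc y + b + (a + b) = y + a + (b + b) := by abel
            _ = y + a := by rw [char2_add_self, add_zero]
          rw [this]
          exact Finset.mem_add.mpr ⟨y, hy, a, ha, rfl⟩
    have hσδ : k ≤ σ + δ := by
      have := Finset.card_le_card hAsub
      omega
    -- sumset of image
    have hY'add : Y' + Y' = (Y+Y).image φ := by
      rw [hY', ← Finset.image_add]
    -- apply induction hypothesis
    have IH := ih (M ⧸ N) hrankQ Y' h0Y' hspan'
    -- translate to real arithmetic
    have hY'cardR : (Y'.card : ℝ) = (k : ℝ) - δ := by
      have := hY'k; push_cast [← this]; ring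
    have hY'addcardR : ((Y' + Y').card : ℝ) ≤ (l : ℝ) - (k : ℝ) + (δ : ℝ) := by
      rw [hY'add]
      have h3 : ((Y+Y).image φ).card + k ≤ l + δ := by omega
      have h3' : ((((Y+Y).image φ).card : ℕ) : ℝ) + (k : ℝ) ≤ (l:ℝ) + (δ:ℝ) := by
        exact_mod_cast h3
      linarith
    have hkδpos : (0:ℝ) < (k:ℝ) - (δ:ℝ) := by
      have hδk : δ < k := by omega
      have hδk' : (δ:ℝ) < (k:ℝ) := by exact_mod_cast hδk
      linarith
    have h2 : (n : ℝ) ≤ Real.logb 2 ((k:ℝ) - (δ:ℝ)) + 2 * ((Y'+Y').card : ℝ) / ((k:ℝ) - (δ:ℝ)) := by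
      rw [← hY'cardR]
      exact IH
    have hfrac : (2 * (((Y'+Y').card : ℕ) : ℝ)) / ((k:ℝ) - (δ:ℝ))
        ≤ (2 * ((l:ℝ) - (k:ℝ) + (δ:ℝ))) / ((k:ℝ) - (δ:ℝ)) :=
      (div_le_div_iff_of_pos_right hkδpos).mpr (by linarith [hY'addcardR])
    have hkey : 2*(l:ℝ)*(δ:ℝ) ≤ (k:ℝ)^2 := by
      have h1 : l * (2*δ) ≤ k * k := by rw [← hcδ]; exact hlcv
      have h2' : ((l : ℕ) : ℝ) * (2*(δ:ℝ)) ≤ ((k:ℕ):ℝ) * ((k:ℕ):ℝ) := by exact_mod_cast h1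
      calc 2*(l:ℝ)*(δ:ℝ) = (l:ℝ)*(2*(δ:ℝ)) := by ring
      _ ≤ (k:ℝ)*(k:ℝ) := h2'
      _ = (k:ℝ)^2 := by ring
    have hnum := numIneq (k:ℝ) (l:ℝ) (δ:ℝ) (by exact_mod_cast hk2) (by exact_mod_cast hlk)
      (by exact_mod_cast hδ1) hkey
    have hgoal : ((n:ℝ) + 1) ≤ Real.logb 2 (k:ℝ) + 2 * (l:ℝ) / (k:ℝ) := by
      linarith [h2, hfrac, hnum]
    push_cast
    push_cast at hgoal
    convert hgoal using 2 <;> norm_num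

lemma card_image_eq_of_eqv {α β γ : Type*} [DecidableEq α] [DecidableEq β] [DecidableEq γ]
    (S : Finset α) (u : α → β) (w : α → γ)
    (h : ∀ p ∈ S, ∀ q ∈ S, (u p = u q ↔ w p = w q)) :
    (S.image u).card = (S.image w).card := by
  induction S using Finset.induction_on with
  | empty => simp
  | @insert a S ha ih =>
    have hsub : ∀ p ∈ S, ∀ q ∈ S, (u p = u q ↔ w p = w q) := fun p hp q hq =>
      h p (Finset.mem_insert_of_mem hp) q (Finset.mem_insert_of_mem hq)
    rw [Finset.image_insert, Finset.image_insert]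
    by_cases hmem : u a ∈ S.image u
    · obtain ⟨q, hq, hq2⟩ := Finset.mem_image.mp hmem
      have hw : w a ∈ S.image w := Finset.mem_image.mpr ⟨q, hq,
        ((h q (Finset.mem_insert_of_mem hq) a (Finset.mem_insert_self a S)).mp hq2)⟩
      rw [Finset.insert_eq_self.mpr hmem, Finset.insert_eq_self.mpr hw]
      exact ih hsub
    · have hw : w a ∉ S.image w := by
        intro hc
        obtain ⟨q, hq, hq2⟩ := Finset.mem_image.mp hc
        exact hmem (Finset.mem_image.mpr ⟨q, hq,
          ((h q (Finset.mem_insert_of_mem hq) a (Finset.mem_insert_self a S)).mpr hq2)⟩)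
      rw [Finset.card_insert_of_notMem hmem, Finset.card_insert_of_notMem hw, ih hsub]


theorem freiman_dimension_bound {n r k l : ℕ} (X : Finset (Vec n))
    (hcard : X.card = k) (hk : 1 ≤ k) (hl : (X + X).card = l)
    (f : Vec n → Vec r)
    (hinj : Set.InjOn f (X : Set (Vec n)))
    (hfreiman : ∀ x₁ ∈ X, ∀ x₂ ∈ X, ∀ x₃ ∈ X, ∀ x₄ ∈ X,
      x₁ + x₂ = x₃ + x₄ ↔ f x₁ + f x₂ = f x₃ + f x₄)
    (hnondeg : ∀ (W : Submodule (ZMod 2) (Vec r)) (a : Vec r),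
      (∀ x ∈ X, f x - a ∈ W) → W = ⊤) :
    (r : ℝ) ≤ Real.logb 2 k + 2 * l / k := by
  obtain ⟨x₀, hx₀⟩ : X.Nonempty := Finset.card_pos.mp (by omega)
  set a := f x₀ with ha
  set Y := X.image f with hY
  set Z := Y.image (· + a) with hZ
  have hYcard : Y.card = X.card := Finset.card_image_of_injOn hinj
  have hZcard : Z.card = X.card := by
    rw [hZ, Finset.card_image_of_injective _ (add_left_injective a), hYcard]
  have hZZ : Z + Z = Y + Y := by
    ext s
    simp only [hZ, Finset.mem_add, Finset.mem_image]
    constructor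
    · rintro ⟨u, ⟨y1, hy1, rfl⟩, w, ⟨z1, hz1, rfl⟩, rfl⟩
      refine ⟨y1, hy1, z1, hz1, ?_⟩
      calc y1 + z1 = y1 + z1 + (a + a) := by rw [char2_add_self, add_zero]
      _ = y1 + a + (z1 + a) := by abel
    · rintro ⟨y1, hy1, z1, hz1, rfl⟩
      refine ⟨y1 + a, ⟨y1, hy1, rfl⟩, z1 + a, ⟨z1, hz1, rfl⟩, ?_⟩
      calc y1 + a + (z1 + a) = y1 + z1 + (a + a) := by abel
      _ = y1 + z1 := by rw [char2_add_self, add_zero]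
  have hXadd : X + X = (X ×ˢ X).image (fun p => p.1 + p.2) := by
    ext s
    simp only [Finset.mem_add, Finset.mem_image, Finset.mem_product]
    constructor
    · rintro ⟨x1, hx1, x2, hx2, rfl⟩
      exact ⟨(x1, x2), ⟨hx1, hx2⟩, rfl⟩
    · rintro ⟨⟨x1, x2⟩, ⟨hx1, hx2⟩, rfl⟩
      exact ⟨x1, hx1, x2, hx2, rfl⟩
  have hYadd : Y + Y = (X ×ˢ X).image (fun p => f p.1 + f p.2) := by
    ext s
    simp only [hY, Finset.mem_add, Finset.mem_image, Finset.mem_product]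
    constructor
    · rintro ⟨u, ⟨x1, hx1, rfl⟩, w, ⟨x2, hx2, rfl⟩, rfl⟩
      exact ⟨(x1, x2), ⟨hx1, hx2⟩, rfl⟩
    · rintro ⟨⟨x1, x2⟩, ⟨hx1, hx2⟩, rfl⟩
      exact ⟨f x1, ⟨x1, hx1, rfl⟩, f x2, ⟨x2, hx2, rfl⟩, rfl⟩
  have hXXcard : (X + X).card = (Y + Y).card := by
    rw [hXadd, hYadd]
    exact card_image_eq_of_eqv _ _ _ (fun p hp q hq => by
      rw [Finset.mem_product] at hp hq
      exact hfreiman p.1 hp.1 p.2 hp.2 q.1 hq.1 q.2 hq.2)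
  have h0Z : (0 : Vec r) ∈ Z := by
    rw [hZ]
    refine Finset.mem_image.mpr ⟨a, ?_, char2_add_self a⟩
    rw [hY]
    exact Finset.mem_image.mpr ⟨x₀, hx₀, rfl⟩
  have hspanZ : Submodule.span (ZMod 2) (Z : Set (Vec r)) = ⊤ := by
    apply hnondeg (Submodule.span (ZMod 2) (Z : Set (Vec r))) a
    intro x hx
    rw [char2_sub_eq_add]
    apply Submodule.subset_span
    rw [hZ, hY]
    simp only [Finset.coe_image, Set.mem_image]
    exact ⟨f x, ⟨x, hx, rfl⟩, rfl⟩
  have hrankV : Module.finrank (ZMod 2) (Vec r) = r := by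
    rw [Module.finrank_pi]
    exact Fintype.card_fin r
  have hmain := main_lemma r (Vec r) hrankV Z h0Z hspanZ
  rw [hZcard, hZZ, hXXcard.symm, hcard, hl] at hmain
  exact hmain
end

section
/- For every ε ∈ (0,1), the set of positive integers n ≥ 2 for which the fractional part {log n + log log n} < 1 − ε/24 has lower natural density at least 1 − ε. -/
open Filter Real

noncomputable def ff (m : ℕ) : ℝ := Real.logb 2 m + Real.logb 2 (Real.logb 2 m)

lemma one_le_logb {m : ℕ} (hm : 2 ≤ m) : 1 ≤ Real.logb 2 m := by
  have : Real.logb 2 2 ≤ Real.logb 2 m :=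
    Real.logb_le_logb_of_le one_lt_two two_pos (by exact_mod_cast hm)
  simpa using this

lemma ff_mono {m m' : ℕ} (hm : 2 ≤ m) (h : m ≤ m') : ff m ≤ ff m' := by
  have hm0 : (0:ℝ) < m := by positivity
  have h1 : Real.logb 2 m ≤ Real.logb 2 m' :=
    Real.logb_le_logb_of_le one_lt_two hm0 (by exact_mod_cast h)
  have h2 : Real.logb 2 (Real.logb 2 m) ≤ Real.logb 2 (Real.logb 2 m') :=
    Real.logb_le_logb_of_le one_lt_two (lt_of_lt_of_le one_pos (one_le_logb hm)) h1
  exact add_le_add h1 h2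

lemma ff_gap {m m' : ℕ} (hm : 2 ≤ m) (h : m ≤ m') :
    ((m' : ℝ) - m) / ((m' : ℝ) * Real.log 2) ≤ ff m' - ff m := by
  have hm0 : (0:ℝ) < m := by positivity
  have hm'0 : (0:ℝ) < m' := lt_of_lt_of_le hm0 (by exact_mod_cast h)
  have hlog : Real.log ((m:ℝ) / m') ≤ (m:ℝ)/m' - 1 :=
    Real.log_le_sub_one_of_pos (by positivity)
  have hd : Real.log (((m:ℝ)) / m') = Real.log m - Real.log m' := Real.log_div hm0.ne' hm'0.ne'
  have key : ((m':ℝ) - m) / (m':ℝ) ≤ Real.log m' - Real.log m := by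
    rw [hd] at hlog
    have : (m:ℝ)/m' - 1 = -(((m':ℝ) - m)/m') := by field_simp; ring
    linarith [hlog, this ▸ hlog]
  have hlog2 : (0:ℝ) < Real.log 2 := Real.log_pos one_lt_two
  have key2 : ((m':ℝ) - m) / ((m':ℝ) * Real.log 2) ≤ Real.logb 2 m' - Real.logb 2 m := by
    rw [Real.logb, Real.logb, div_sub_div_same]
    rw [div_le_div_iff₀ (by positivity) hlog2]
    have e : ((m':ℝ) - m) * Real.log 2 = (((m':ℝ) - m)/m') * (m' * Real.log 2) := by
      field_simp
    rw [e]
    exact mul_le_mul_of_nonneg_right key (by positivity)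
  have h2 : Real.logb 2 (Real.logb 2 m) ≤ Real.logb 2 (Real.logb 2 m') := by
    apply Real.logb_le_logb_of_le one_lt_two (lt_of_lt_of_le one_pos (one_le_logb hm))
    exact Real.logb_le_logb_of_le one_lt_two hm0 (by exact_mod_cast h)
  unfold ff; linarith

lemma window_count (δ : ℝ) (hδ : 0 < δ) (k : ℕ) (hk : 1 ≤ k) (j : ℤ) :
    ((((Finset.Ico (2^k) (2^(k+1))).filter
      (fun m => 1 - δ ≤ Int.fract (ff m) ∧ ⌊ff m⌋ = j)).card : ℝ))
      ≤ δ * Real.log 2 * 2^(k+1) + 1 := by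
  set T := (Finset.Ico (2^k) (2^(k+1))).filter
      (fun m => 1 - δ ≤ Int.fract (ff m) ∧ ⌊ff m⌋ = j) with hT
  have hpos : (0:ℝ) ≤ δ * Real.log 2 * 2^(k+1) := by
    have := Real.log_pos (by norm_num : (1:ℝ) < 2)
    positivity
  rcases T.eq_empty_or_nonempty with he | hne
  · rw [he]; simpa using by linarith
  set a := T.min' hne with ha
  have haT : a ∈ T := T.min'_mem hne
  have hmem : ∀ m ∈ T, 2^k ≤ m ∧ m < 2^(k+1) ∧ 1 - δ ≤ Int.fract (ff m) ∧ ⌊ff m⌋ = j := by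
    intro m hm
    rw [hT, Finset.mem_filter, Finset.mem_Ico] at hm
    tauto
  have h2 : ∀ m ∈ T, 2 ≤ m := by
    intro m hm
    calc 2 = 2^1 := rfl
    _ ≤ 2^k := Nat.pow_le_pow_right (by norm_num) hk
    _ ≤ m := (hmem m hm).1
  set D := Nat.floor (δ * Real.log 2 * 2^(k+1)) with hD
  have hsub : T ⊆ Finset.Icc a (a + D) := by
    intro m hm
    rw [Finset.mem_Icc]
    have ham : a ≤ m := T.min'_le m hm
    refine ⟨ham, ?_⟩
    have hdiff : ff m - ff a < δ := by
      have e1 : ff m = (j : ℝ) + Int.fract (ff m) := by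
        rw [← (hmem m hm).2.2.2]; exact (Int.floor_add_fract _).symm
      have e2 : ff a = (j : ℝ) + Int.fract (ff a) := by
        rw [← (hmem a haT).2.2.2]; exact (Int.floor_add_fract _).symm
      have l1 : Int.fract (ff m) < 1 := Int.fract_lt_one _
      have l2 : 1 - δ ≤ Int.fract (ff a) := (hmem a haT).2.2.1
      rw [e1, e2]; linarith
    have hgap := ff_gap (h2 a haT) ham
    have hml : (m:ℝ) ≤ 2^(k+1) := by
      have := (hmem m hm).2.1
      have : (m:ℝ) < ((2^(k+1) : ℕ) : ℝ) := by exact_mod_cast this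
      push_cast at this
      linarith
    have hlog2 : (0:ℝ) < Real.log 2 := Real.log_pos one_lt_two
    have hm0 : (0:ℝ) < m := by
      have := h2 m hm; positivity
    have hfrac : ((m:ℝ) - a) / ((m:ℝ) * Real.log 2) < δ := lt_of_le_of_lt hgap hdiff
    have hlin : ((m:ℝ) - a) < δ * ((m:ℝ) * Real.log 2) :=
      (div_lt_iff₀ (by positivity)).mp hfrac
    have hbound : ((m:ℝ) - a) ≤ δ * Real.log 2 * 2^(k+1) := by
      have : δ * ((m:ℝ) * Real.log 2) ≤ δ * Real.log 2 * 2^(k+1) := by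
        rw [show δ * ((m:ℝ) * Real.log 2) = δ * Real.log 2 * m by ring]
        exact mul_le_mul_of_nonneg_left hml (by positivity)
      linarith
    have : ((m - a : ℕ) : ℝ) ≤ δ * Real.log 2 * 2^(k+1) := by
      rw [Nat.cast_sub ham]; exact hbound
    have := Nat.le_floor this
    omega
  have hcard : T.card ≤ D + 1 := by
    calc T.card ≤ (Finset.Icc a (a + D)).card := Finset.card_le_card hsub
    _ = D + 1 := by rw [Nat.card_Icc]; omega
  calc (T.card : ℝ) ≤ (D : ℝ) + 1 := by exact_mod_cast hcard
  _ ≤ δ * Real.log 2 * 2^(k+1) + 1 := by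
      have := Nat.floor_le hpos
      linarith

lemma ff_pow {k : ℕ} (hk : 1 ≤ k) : ff (2^k) = k + Real.logb 2 k := by
  unfold ff
  have h1 : ((2^k : ℕ) : ℝ) = (2:ℝ)^k := by push_cast; ring
  rw [h1, Real.logb_pow, Real.logb_self_eq_one one_lt_two, mul_one]

lemma block_bound (δ : ℝ) (hδ : 0 < δ) (k : ℕ) (hk : 1 ≤ k) :
    ((((Finset.Ico (2^k) (2^(k+1))).filter (fun m => 1 - δ ≤ Int.fract (ff m))).card : ℝ))
      ≤ 3 * (δ * Real.log 2 * 2^(k+1) + 1) := by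
  classical
  set T : ℤ → Finset ℕ := fun j => (Finset.Ico (2^k) (2^(k+1))).filter
      (fun m => 1 - δ ≤ Int.fract (ff m) ∧ ⌊ff m⌋ = j) with hTdef
  set L := ⌊ff (2^k)⌋ with hL
  have h2k : 2 ≤ 2^k := by
    calc 2 = 2^1 := rfl
    _ ≤ 2^k := Nat.pow_le_pow_right (by norm_num) hk
  have hk1 : (1:ℝ) ≤ (k:ℝ) := by exact_mod_cast hk
  have hstep : Real.logb 2 ((k:ℝ)+1) ≤ 1 + Real.logb 2 k := by
    have h1 : ((k:ℝ)+1) ≤ 2*k := by linarith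
    calc Real.logb 2 ((k:ℝ)+1) ≤ Real.logb 2 (2*(k:ℝ)) :=
          Real.logb_le_logb_of_le one_lt_two (by linarith) h1
    _ = Real.logb 2 2 + Real.logb 2 k := Real.logb_mul (by norm_num) (by linarith)
    _ = 1 + Real.logb 2 k := by rw [Real.logb_self_eq_one] <;> norm_num
  have hup : ∀ m ∈ Finset.Ico (2^k) (2^(k+1)), ff m < (L:ℝ) + 3 := by
    intro m hm
    rw [Finset.mem_Ico] at hm
    have h1 : ff m ≤ ff (2^(k+1)) := ff_mono (le_trans h2k hm.1) (le_of_lt hm.2)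
    have h2 : ff (2^(k+1)) = (k+1:ℕ) + Real.logb 2 (k+1:ℕ) := ff_pow (by omega)
    have h3 : ff (2^k) = k + Real.logb 2 k := ff_pow hk
    have h4 : ff (2^k) < (L:ℝ) + 1 := Int.lt_floor_add_one _
    push_cast at h2
    rw [h2] at h1
    linarith
  have hlo : ∀ m ∈ Finset.Ico (2^k) (2^(k+1)), (L:ℝ) ≤ ff m := by
    intro m hm
    rw [Finset.mem_Ico] at hm
    exact le_trans (Int.floor_le _) (ff_mono h2k hm.1)
  have hsub : (Finset.Ico (2^k) (2^(k+1))).filter (fun m => 1 - δ ≤ Int.fract (ff m))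
      ⊆ T L ∪ T (L+1) ∪ T (L+2) := by
    intro m hm
    rw [Finset.mem_filter] at hm
    have hfl : L ≤ ⌊ff m⌋ := Int.le_floor.mpr (hlo m hm.1)
    have hfu : ⌊ff m⌋ < L + 3 := Int.floor_lt.mpr (by push_cast; linarith [hup m hm.1])
    have : ⌊ff m⌋ = L ∨ ⌊ff m⌋ = L + 1 ∨ ⌊ff m⌋ = L + 2 := by omega
    simp only [Finset.mem_union, hTdef, Finset.mem_filter]
    tauto
  have hc : ((Finset.Ico (2^k) (2^(k+1))).filter (fun m => 1 - δ ≤ Int.fract (ff m))).card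
      ≤ (T L).card + (T (L+1)).card + (T (L+2)).card := by
    calc _ ≤ (T L ∪ T (L+1) ∪ T (L+2)).card := Finset.card_le_card hsub
    _ ≤ (T L ∪ T (L+1)).card + (T (L+2)).card := Finset.card_union_le _ _
    _ ≤ (T L).card + (T (L+1)).card + (T (L+2)).card :=
        Nat.add_le_add_right (Finset.card_union_le _ _) _
  have w1 := window_count δ hδ k hk L
  have w2 := window_count δ hδ k hk (L+1)
  have w3 := window_count δ hδ k hk (L+2)
  have w1' : ((T L).card : ℝ) ≤ δ * Real.log 2 * 2^(k+1) + 1 := w1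
  have w2' : ((T (L+1)).card : ℝ) ≤ δ * Real.log 2 * 2^(k+1) + 1 := w2
  have w3' : ((T (L+2)).card : ℝ) ≤ δ * Real.log 2 * 2^(k+1) + 1 := w3
  have hcr : (((Finset.Ico (2^k) (2^(k+1))).filter (fun m => 1 - δ ≤ Int.fract (ff m))).card : ℝ)
      ≤ ((T L).card : ℝ) + ((T (L+1)).card : ℝ) + ((T (L+2)).card : ℝ) := by exact_mod_cast hc
  linarith

lemma global_bound (δ : ℝ) (hδ : 0 < δ) (n : ℕ) (hn : 2 ≤ n) :
    (((Finset.Icc 2 n).filter (fun m => 1 - δ ≤ Int.fract (ff m))).card : ℝ)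
      ≤ 12 * δ * Real.log 2 * n + 3 * (Nat.log 2 n) := by
  classical
  set K := Nat.log 2 n with hK
  set Blk : ℕ → Finset ℕ := fun k =>
    (Finset.Ico (2^k) (2^(k+1))).filter (fun m => 1 - δ ≤ Int.fract (ff m)) with hBlk
  have hsub : (Finset.Icc 2 n).filter (fun m => 1 - δ ≤ Int.fract (ff m))
      ⊆ (Finset.Icc 1 K).biUnion Blk := by
    intro m hm
    rw [Finset.mem_filter, Finset.mem_Icc] at hm
    obtain ⟨⟨hm2, hmn⟩, hbad⟩ := hm
    have hm0 : m ≠ 0 := by omega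
    rw [Finset.mem_biUnion]
    refine ⟨Nat.log 2 m, ?_, ?_⟩
    · rw [Finset.mem_Icc]
      refine ⟨(Nat.le_log_iff_pow_le one_lt_two hm0).mpr (by simpa using hm2), ?_⟩
      exact Nat.log_mono_right hmn
    · rw [hBlk]
      rw [Finset.mem_filter, Finset.mem_Ico]
      exact ⟨⟨Nat.pow_log_le_self 2 hm0, Nat.lt_pow_succ_log_self one_lt_two m⟩, hbad⟩
  have hlog2 : (0:ℝ) < Real.log 2 := Real.log_pos one_lt_two
  have hcard : (((Finset.Icc 2 n).filter (fun m => 1 - δ ≤ Int.fract (ff m))).card : ℕ)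
      ≤ ∑ k ∈ Finset.Icc 1 K, (Blk k).card :=
    le_trans (Finset.card_le_card hsub) (Finset.card_biUnion_le)
  have hsum1 : (∑ k ∈ Finset.Icc 1 K, ((Blk k).card : ℝ))
      ≤ ∑ k ∈ Finset.Icc 1 K, (3 * (δ * Real.log 2 * 2^(k+1) + 1)) := by
    apply Finset.sum_le_sum
    intro k hk
    rw [Finset.mem_Icc] at hk
    exact block_bound δ hδ k hk.1
  have hgeom : (∑ k ∈ Finset.Icc 1 K, ((2:ℝ))^(k+1)) ≤ 2^(K+2) := by
    have h1 : (∑ k ∈ Finset.Icc 1 K, ((2:ℝ))^(k+1))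
        ≤ ∑ k ∈ Finset.range (K+1), ((2:ℝ))^(k+1) := by
      apply Finset.sum_le_sum_of_subset_of_nonneg
      · intro k hk
        rw [Finset.mem_Icc] at hk
        rw [Finset.mem_range]
        omega
      · intro k _ _; positivity
    have h2 : (∑ k ∈ Finset.range (K+1), ((2:ℝ))^(k+1))
        = 2 * ((2:ℝ)^(K+1) - 1) := by
      have : (∑ k ∈ Finset.range (K+1), ((2:ℝ))^(k+1))
          = 2 * ∑ k ∈ Finset.range (K+1), ((2:ℝ))^k := by
        rw [Finset.mul_sum]
        apply Finset.sum_congr rfl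
        intro k _; ring
      rw [this, geom_sum_eq (by norm_num : (2:ℝ) ≠ 1)]
      norm_num
    have h3 : 2 * ((2:ℝ)^(K+1) - 1) ≤ 2^(K+2) := by
      have e1 : (2:ℝ)^(K+1) = 2*2^K := by ring
      have e2 : (2:ℝ)^(K+2) = 4*2^K := by ring
      nlinarith [pow_pos (show (0:ℝ)<2 by norm_num) K]
    linarith
  have hsum2 : (∑ k ∈ Finset.Icc 1 K, (3 * (δ * Real.log 2 * 2^(k+1) + 1) : ℝ))
      = 3 * (δ * Real.log 2) * (∑ k ∈ Finset.Icc 1 K, ((2:ℝ))^(k+1)) + 3 * K := by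
    calc (∑ k ∈ Finset.Icc 1 K, (3 * (δ * Real.log 2 * 2^(k+1) + 1) : ℝ))
        = ∑ k ∈ Finset.Icc 1 K, ((3 * (δ * Real.log 2) * 2^(k+1) : ℝ) + 3) :=
          Finset.sum_congr rfl (by intro k _; ring)
      _ = (∑ k ∈ Finset.Icc 1 K, (3 * (δ * Real.log 2) * 2^(k+1) : ℝ))
            + ∑ _k ∈ Finset.Icc 1 K, (3:ℝ) := Finset.sum_add_distrib
      _ = 3 * (δ * Real.log 2) * (∑ k ∈ Finset.Icc 1 K, ((2:ℝ))^(k+1)) + 3 * K := by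
          rw [← Finset.mul_sum, Finset.sum_const, Nat.card_Icc]
          simp [nsmul_eq_mul]
          ring
  have h2K : ((2:ℝ))^K ≤ n := by
    have := Nat.pow_log_le_self 2 (show n ≠ 0 by omega)
    exact_mod_cast this
  have hfin : 3 * (δ * Real.log 2) * ((2:ℝ))^(K+2) ≤ 12 * δ * Real.log 2 * n := by
    have : ((2:ℝ))^(K+2) = 4 * 2^K := by ring
    rw [this]
    nlinarith [h2K, mul_pos hδ hlog2]
  calc (((Finset.Icc 2 n).filter (fun m => 1 - δ ≤ Int.fract (ff m))).card : ℝ)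
      ≤ ∑ k ∈ Finset.Icc 1 K, ((Blk k).card : ℝ) := by exact_mod_cast hcard
    _ ≤ ∑ k ∈ Finset.Icc 1 K, (3 * (δ * Real.log 2 * 2^(k+1) + 1)) := hsum1
    _ = 3 * (δ * Real.log 2) * (∑ k ∈ Finset.Icc 1 K, ((2:ℝ))^(k+1)) + 3 * K := hsum2
    _ ≤ 3 * (δ * Real.log 2) * 2^(K+2) + 3 * K := by
        have := mul_le_mul_of_nonneg_left hgeom (by positivity : (0:ℝ) ≤ 3 * (δ * Real.log 2))
        linarith
    _ ≤ 12 * δ * Real.log 2 * n + 3 * K := by linarith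

lemma log_le_two_sqrt (n : ℕ) : Nat.log 2 n ≤ 2 * Nat.sqrt n := by
  rcases Nat.eq_zero_or_pos n with h | h
  · simp [h]
  set s := Nat.sqrt n
  have h1 : n < (s+1)^2 := Nat.lt_succ_sqrt' n
  have h2 : s + 1 ≤ 2^s := Nat.lt_two_pow_self
  have h3 : n < 2^(2*s+1) := by
    calc n < (s+1)^2 := h1
    _ ≤ (2^s)^2 := Nat.pow_le_pow_left h2 2
    _ = 2^(2*s) := by rw [← pow_mul, Nat.mul_comm]
    _ ≤ 2^(2*s+1) := Nat.pow_le_pow_right (by norm_num) (by omega)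
  have := Nat.log_lt_of_lt_pow (by omega : n ≠ 0) h3
  omega

theorem fract_log_loglog_density (ε : ℝ) (hε : 0 < ε) (hε1 : ε < 1) :
    1 - ε ≤ Filter.liminf (fun n : ℕ =>
      (Nat.card ↥({m : ℕ | 2 ≤ m ∧
          Int.fract (Real.logb 2 m + Real.logb 2 (Real.logb 2 m)) < 1 - ε / 24} ∩
        Set.Icc 1 n) : ℝ) / n) Filter.atTop := by
  classical
  set δ : ℝ := ε / 24 with hδdef
  have hδ : 0 < δ := by positivity
  set Good : ℕ → Finset ℕ := fun n =>
    (Finset.Icc 2 n).filter (fun m => Int.fract (ff m) < 1 - δ) with hGood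
  set Bad : ℕ → Finset ℕ := fun n =>
    (Finset.Icc 2 n).filter (fun m => 1 - δ ≤ Int.fract (ff m)) with hBad
  have hset : ∀ n : ℕ, ({m : ℕ | 2 ≤ m ∧
      Int.fract (Real.logb 2 m + Real.logb 2 (Real.logb 2 m)) < 1 - ε / 24} ∩
        Set.Icc 1 n) = ↑(Good n) := by
    intro n
    ext m
    simp only [hGood, Set.mem_inter_iff, Set.mem_setOf_eq, Set.mem_Icc, Finset.coe_filter,
      Finset.mem_Icc, Set.mem_setOf_eq, ff, hδdef]
    exact ⟨fun ⟨⟨h2, hf⟩, _, hn⟩ => ⟨⟨h2, hn⟩, hf⟩,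
      fun ⟨⟨h2, hn⟩, hf⟩ => ⟨⟨h2, hf⟩, le_trans one_le_two h2, hn⟩⟩
  have hfun : (fun n : ℕ => (Nat.card ↥({m : ℕ | 2 ≤ m ∧
      Int.fract (Real.logb 2 m + Real.logb 2 (Real.logb 2 m)) < 1 - ε / 24} ∩
        Set.Icc 1 n) : ℝ) / n) = (fun n : ℕ => ((Good n).card : ℝ) / n) := by
    funext n
    rw [hset n, Nat.card_coe_set_eq, Set.ncard_coe_finset]
  rw [hfun]
  have hsum : ∀ n : ℕ, 2 ≤ n → ((Good n).card : ℝ) + ((Bad n).card : ℝ) = (n : ℝ) - 1 := by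
    intro n hn
    have h1 : (Good n).card + (Bad n).card = (Finset.Icc 2 n).card := by
      have := Finset.card_filter_add_card_filter_not (s := Finset.Icc 2 n)
        (p := fun m => Int.fract (ff m) < 1 - δ)
      simpa [hGood, hBad, not_lt] using this
    have h2 : (Finset.Icc 2 n).card = n - 1 := by rw [Nat.card_Icc]; omega
    rw [h2] at h1
    have : ((Good n).card + (Bad n).card : ℝ) = ((n - 1 : ℕ) : ℝ) := by exact_mod_cast h1
    rw [Nat.cast_sub (by omega)] at this
    push_cast at this ⊢
    linarith
  have hgoodcard : ∀ n : ℕ, ((Good n).card : ℝ) ≤ n := by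
    intro n
    have h1 : (Good n).card ≤ (Finset.Icc 2 n).card := Finset.card_filter_le _ _
    have h2 : (Finset.Icc 2 n).card ≤ n := by rw [Nat.card_Icc]; omega
    exact_mod_cast le_trans h1 h2
  -- the eventual lower bound
  set s₀ : ℕ := ⌈14 / ε⌉₊ + 1 with hs₀
  set N : ℕ := max (s₀ * s₀) 2 with hN
  have hev : ∀ n : ℕ, N ≤ n → 1 - ε ≤ ((Good n).card : ℝ) / n := by
    intro n hn
    have hn2 : 2 ≤ n := le_trans (le_max_right _ _) hn
    have hnR : (0:ℝ) < n := by positivity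
    set s : ℕ := Nat.sqrt n with hs
    have hss₀ : s₀ ≤ s := by
      calc s₀ = Nat.sqrt (s₀ * s₀) := (Nat.sqrt_eq s₀).symm
      _ ≤ s := Nat.sqrt_le_sqrt (le_trans (le_max_left _ _) hn)
    have hs1 : (1:ℝ) ≤ (s:ℝ) := by
      have : 1 ≤ s := le_trans (by omega) hss₀
      exact_mod_cast this
    have hs2 : ((s:ℝ)) * s ≤ n := by
      have h : s^2 ≤ n := Nat.sqrt_le' n
      have h2 : ((s:ℝ))^2 ≤ (n:ℝ) := by exact_mod_cast h
      nlinarith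
    have hs3 : 14 / ε ≤ (s:ℝ) := by
      calc 14 / ε ≤ (⌈14 / ε⌉₊ : ℝ) := Nat.le_ceil _
      _ ≤ (s:ℝ) := by exact_mod_cast le_trans (by omega) hss₀
    have h14 : 14 ≤ ε * s := by
      rw [div_le_iff₀ hε] at hs3; linarith
    have hbad : ((Bad n).card : ℝ) ≤ 12 * δ * Real.log 2 * n + 3 * (Nat.log 2 n) :=
      global_bound δ hδ n hn2
    have hlogsqrt : ((Nat.log 2 n : ℕ) : ℝ) ≤ 2 * (s:ℝ) := by
      exact_mod_cast log_le_two_sqrt n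
    have hln2 : Real.log 2 ≤ 0.6931471808 := (Real.log_two_lt_d9).le
    have hln2pos : (0:ℝ) < Real.log 2 := Real.log_pos one_lt_two
    -- Bad n ≤ 0.35 ε n + 6 s
    have hbad2 : ((Bad n).card : ℝ) ≤ 12 * δ * Real.log 2 * n + 6 * s := by
      linarith
    have hδc : 12 * δ * Real.log 2 ≤ 0.35 * ε := by
      rw [hδdef]
      nlinarith
    have h7s : 6 * (s:ℝ) + 1 ≤ (ε / 2) * n := by
      have h1 : 6 * (s:ℝ) + 1 ≤ 7 * s := by linarith
      have h2 : 7 * (s:ℝ) ≤ (ε / 2) * (s * s) := by nlinarith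
      have h3 : (ε / 2) * ((s:ℝ) * s) ≤ (ε / 2) * n := by nlinarith
      linarith
    have hgood : ((Good n).card : ℝ) = (n:ℝ) - 1 - (Bad n).card := by
      have := hsum n hn2; linarith
    rw [le_div_iff₀ hnR]
    have : (1 - ε) * n ≤ (n:ℝ) - 1 - (Bad n).card := by nlinarith
    linarith [hgood]
  apply Filter.le_liminf_of_le
  · apply Filter.isCoboundedUnder_ge_of_eventually_le (l := atTop) (x := 1)
    filter_upwards [Filter.eventually_ge_atTop 1] with n hn
    have hnR : (0:ℝ) < n := by exact_mod_cast hn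
    rw [div_le_one hnR]
    exact hgoodcard n
  · filter_upwards [Filter.eventually_ge_atTop N] with n hn
    exact hev n hn
end

section
/- For every ε ∈ (0, 1/2) there is a constant C = C(ε) such that for every n and every X ⊆ F₂ⁿ there is a linear subspace V ≤ F₂ⁿ of codimension at most C with respect to which X is ε-regular. -/
open Finset

/-- The standard bilinear form on `F₂ⁿ`. -/
def bform {n : ℕ} (v r : Vec n) : ZMod 2 := ∑ j, v j * r j

/-- The Fourier coefficient `𝔼_{v ∈ W} 1_X(v + i)·(−1)^{⟨v,r⟩}` of the translate
`(X - i) ∩ W`. -/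
noncomputable def fourierAvg {n : ℕ} (W : Submodule (ZMod 2) (Vec n))
    (X : Set (Vec n)) (i r : Vec n) : ℝ :=
  (∑ᶠ v ∈ (W : Set (Vec n)),
    Set.indicator X (fun _ => (1 : ℝ)) (v + i) * (-1 : ℝ) ^ (bform v r).val) /
    (Nat.card W : ℝ)

/-- `i` is an ε-regular value for `X` with respect to `W`: every nontrivial Fourier
coefficient of `(X - i) ∩ W` is at most `ε` in absolute value. -/
def IsRegularValue {n : ℕ} (W : Submodule (ZMod 2) (Vec n)) (X : Set (Vec n))
    (ε : ℝ) (i : Vec n) : Prop :=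
  ∀ r : Vec n, (∃ v ∈ W, bform v r ≠ 0) → |fourierAvg W X i r| ≤ ε

noncomputable section
namespace Reg

variable {n : ℕ}

lemma two_torsion (v : Vec n) : v + v = 0 := by
  funext j
  exact (by decide : ∀ a : ZMod 2, a + a = 0) (v j)

lemma bform_add_left (u v r : Vec n) : bform (u + v) r = bform u r + bform v r := by
  simp [bform, add_mul, Finset.sum_add_distrib]

def phi (r : Vec n) : Vec n →ₗ[ZMod 2] ZMod 2 where
  toFun v := bform v r
  map_add' u v := bform_add_left u v r
  map_smul' c v := by simp [bform, Finset.mul_sum, mul_assoc]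

open Classical in
def WS (W : Submodule (ZMod 2) (Vec n)) : Finset (Vec n) :=
  Finset.univ.filter (· ∈ W)

lemma mem_WS {W : Submodule (ZMod 2) (Vec n)} {v : Vec n} : v ∈ WS W ↔ v ∈ W := by
  classical
  simp [WS]

lemma card_WS_pos (W : Submodule (ZMod 2) (Vec n)) : 0 < (WS W).card :=
  Finset.card_pos.2 ⟨0, mem_WS.2 W.zero_mem⟩

def ind (X : Set (Vec n)) : Vec n → ℝ := Set.indicator X (fun _ => (1 : ℝ))

lemma ind_nonneg (X : Set (Vec n)) (x : Vec n) : 0 ≤ ind X x :=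
  Set.indicator_nonneg (fun _ _ => zero_le_one) x

lemma ind_le_one (X : Set (Vec n)) (x : Vec n) : ind X x ≤ 1 :=
  Set.indicator_le' (fun _ _ => le_refl 1) (fun _ _ => zero_le_one) x

def Asum (W : Submodule (ZMod 2) (Vec n)) (X : Set (Vec n)) (i : Vec n) : ℝ :=
  ∑ v ∈ WS W, ind X (v + i)

def Aden (W : Submodule (ZMod 2) (Vec n)) (X : Set (Vec n)) (i : Vec n) : ℝ :=
  Asum W X i / (WS W).card

def Ssum (W : Submodule (ZMod 2) (Vec n)) (X : Set (Vec n)) (i r : Vec n) : ℝ :=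
  ∑ v ∈ WS W, ind X (v + i) * (-1 : ℝ) ^ (bform v r).val

def En (W : Submodule (ZMod 2) (Vec n)) (X : Set (Vec n)) : ℝ :=
  ∑ i : Vec n, (Aden W X i) ^ 2

lemma coe_WS (W : Submodule (ZMod 2) (Vec n)) : (WS W : Set (Vec n)) = (W : Set (Vec n)) := by
  ext v; simp [mem_WS]

lemma natCard_W (W : Submodule (ZMod 2) (Vec n)) : Nat.card W = (WS W).card := by
  classical
  rw [Nat.card_eq_fintype_card, WS]
  rw [← Fintype.card_subtype]

lemma fourierAvg_eq (W : Submodule (ZMod 2) (Vec n)) (X : Set (Vec n)) (i r : Vec n) :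
    fourierAvg W X i r = Ssum W X i r / (WS W).card := by
  rw [fourierAvg, natCard_W, Ssum, ← coe_WS W, finsum_mem_coe_finset]
  rfl

/-- translation invariance of sums over `WS W` by elements of `W`. -/
lemma transl {W : Submodule (ZMod 2) (Vec n)} {w : Vec n} (hw : w ∈ W)
    (g : Vec n → ℝ) : ∑ v ∈ WS W, g (w + v) = ∑ v ∈ WS W, g v := by
  apply Finset.sum_nbij' (fun v => w + v) (fun v => w + v)
  · intro a ha
    exact mem_WS.2 (W.add_mem hw (mem_WS.1 ha))
  · intro a ha
    exact mem_WS.2 (W.add_mem hw (mem_WS.1 ha))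
  · intro a _
    rw [← add_assoc, two_torsion, zero_add]
  · intro a _
    rw [← add_assoc, two_torsion, zero_add]
  · intro a _
    rfl

lemma Aden_nonneg (W : Submodule (ZMod 2) (Vec n)) (X : Set (Vec n)) (i : Vec n) :
    0 ≤ Aden W X i := by
  apply div_nonneg _ (Nat.cast_nonneg _)
  exact Finset.sum_nonneg fun v _ => ind_nonneg X _

lemma Aden_le_one (W : Submodule (ZMod 2) (Vec n)) (X : Set (Vec n)) (i : Vec n) :
    Aden W X i ≤ 1 := by
  rw [Aden, div_le_one (by exact_mod_cast card_WS_pos W)]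
  calc Asum W X i ≤ ∑ v ∈ WS W, 1 := Finset.sum_le_sum fun v _ => ind_le_one X _
  _ = (WS W).card := by simp

lemma En_nonneg (W : Submodule (ZMod 2) (Vec n)) (X : Set (Vec n)) : 0 ≤ En W X :=
  Finset.sum_nonneg fun i _ => sq_nonneg _

lemma En_le (W : Submodule (ZMod 2) (Vec n)) (X : Set (Vec n)) :
    En W X ≤ (2 : ℝ) ^ n := by
  have : En W X ≤ ∑ _i : Vec n, (1 : ℝ) :=
    Finset.sum_le_sum fun i _ => by
      have h1 := Aden_nonneg W X i
      have h2 := Aden_le_one W X i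
      nlinarith
  simpa using this

/-- L1: averaging identity. -/
lemma avg_id {W W' : Submodule (ZMod 2) (Vec n)} (h : W' ≤ W) (X : Set (Vec n)) (i : Vec n) :
    ∑ v ∈ WS W, Aden W' X (v + i) = (WS W).card * Aden W X i := by
  have key : ∑ v ∈ WS W, Asum W' X (v + i) = (WS W').card * Asum W X i := by
    calc ∑ v ∈ WS W, Asum W' X (v + i)
        = ∑ v ∈ WS W, ∑ w ∈ WS W', ind X (w + (v + i)) := rfl
      _ = ∑ w ∈ WS W', ∑ v ∈ WS W, ind X (w + (v + i)) := Finset.sum_comm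
      _ = ∑ w ∈ WS W', ∑ v ∈ WS W, ind X (v + i) := by
          refine Finset.sum_congr rfl fun w hw => ?_
          have := transl (W := W) (h (mem_WS.1 hw)) (fun x => ind X (x + i))
          calc ∑ v ∈ WS W, ind X (w + (v + i)) = ∑ v ∈ WS W, ind X ((w + v) + i) := by
                refine Finset.sum_congr rfl fun v _ => ?_
                rw [add_assoc]
            _ = ∑ v ∈ WS W, ind X (v + i) := this
      _ = (WS W').card * Asum W X i := by rw [Finset.sum_const, nsmul_eq_mul]; rfl
  have hc' : (0 : ℝ) < (WS W').card := by exact_mod_cast card_WS_pos W'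
  calc ∑ v ∈ WS W, Aden W' X (v + i) = (∑ v ∈ WS W, Asum W' X (v + i)) / (WS W').card := by
        rw [Finset.sum_div]; rfl
    _ = ((WS W').card * Asum W X i) / (WS W').card := by rw [key]
    _ = Asum W X i := by field_simp
    _ = (WS W).card * Aden W X i := by
        rw [Aden]
        field_simp [(by exact_mod_cast card_WS_pos W : (0:ℝ) < (WS W).card).ne']

/-- L2: pointwise Cauchy–Schwarz. -/
lemma cs_pointwise {W W' : Submodule (ZMod 2) (Vec n)} (h : W' ≤ W) (X : Set (Vec n))
    (i : Vec n) :
    (WS W).card * (Aden W X i) ^ 2 ≤ ∑ v ∈ WS W, (Aden W' X (v + i)) ^ 2 := by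
  have hc : (0 : ℝ) < (WS W).card := by exact_mod_cast card_WS_pos W
  have := sq_sum_le_card_mul_sum_sq (s := WS W) (f := fun v => Aden W' X (v + i))
  rw [avg_id h X i] at this
  have expand : ((WS W).card * Aden W X i) ^ 2 = (WS W).card * ((WS W).card * (Aden W X i)^2) := by
    ring
  rw [expand] at this
  exact le_of_mul_le_mul_left this hc

/-- L3: double counting. -/
lemma double_count (W W' : Submodule (ZMod 2) (Vec n)) (X : Set (Vec n)) :
    ∑ i : Vec n, ∑ v ∈ WS W, (Aden W' X (v + i)) ^ 2 = (WS W).card * En W' X := by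
  rw [Finset.sum_comm]
  have : ∀ v : Vec n, ∑ i : Vec n, (Aden W' X (v + i)) ^ 2 = En W' X := by
    intro v
    exact Fintype.sum_equiv (Equiv.addLeft v) _ _ fun i => rfl
  calc ∑ v ∈ WS W, ∑ i : Vec n, (Aden W' X (v + i)) ^ 2 = ∑ v ∈ WS W, En W' X :=
      Finset.sum_congr rfl fun v _ => this v
    _ = (WS W).card * En W' X := by rw [Finset.sum_const, nsmul_eq_mul]

/-- local energy monotonicity. -/
lemma local_mono {W W₀ W' : Submodule (ZMod 2) (Vec n)} (h1 : W' ≤ W₀) (h2 : W₀ ≤ W)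
    (X : Set (Vec n)) (i : Vec n) :
    ∑ v ∈ WS W, (Aden W₀ X (v + i)) ^ 2 ≤ ∑ v ∈ WS W, (Aden W' X (v + i)) ^ 2 := by
  have hc0 : (0 : ℝ) < (WS W₀).card := by exact_mod_cast card_WS_pos W₀
  have step : ∀ v ∈ WS W, (WS W₀).card * (Aden W₀ X (v + i)) ^ 2
      ≤ ∑ w ∈ WS W₀, (Aden W' X (w + (v + i))) ^ 2 := fun v _ => cs_pointwise h1 X (v + i)
  have sums : ∑ v ∈ WS W, ∑ w ∈ WS W₀, (Aden W' X (w + (v + i))) ^ 2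
      = (WS W₀).card * ∑ v ∈ WS W, (Aden W' X (v + i)) ^ 2 := by
    rw [Finset.sum_comm]
    have : ∀ w ∈ WS W₀, ∑ v ∈ WS W, (Aden W' X (w + (v + i))) ^ 2
        = ∑ v ∈ WS W, (Aden W' X (v + i)) ^ 2 := by
      intro w hw
      have := transl (W := W) (h2 (mem_WS.1 hw)) (fun x => (Aden W' X (x + i)) ^ 2)
      calc ∑ v ∈ WS W, (Aden W' X (w + (v + i))) ^ 2
          = ∑ v ∈ WS W, (Aden W' X ((w + v) + i)) ^ 2 := by
            refine Finset.sum_congr rfl fun v _ => ?_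
            rw [add_assoc]
        _ = ∑ v ∈ WS W, (Aden W' X (v + i)) ^ 2 := this
    calc ∑ w ∈ WS W₀, ∑ v ∈ WS W, (Aden W' X (w + (v + i))) ^ 2
        = ∑ w ∈ WS W₀, ∑ v ∈ WS W, (Aden W' X (v + i)) ^ 2 := Finset.sum_congr rfl this
      _ = (WS W₀).card * ∑ v ∈ WS W, (Aden W' X (v + i)) ^ 2 := by
          rw [Finset.sum_const, nsmul_eq_mul]
  have total : (WS W₀).card * ∑ v ∈ WS W, (Aden W₀ X (v + i)) ^ 2
      ≤ (WS W₀).card * ∑ v ∈ WS W, (Aden W' X (v + i)) ^ 2 := by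
    rw [Finset.mul_sum]
    calc ∑ v ∈ WS W, (WS W₀).card * (Aden W₀ X (v + i)) ^ 2
        ≤ ∑ v ∈ WS W, ∑ w ∈ WS W₀, (Aden W' X (w + (v + i))) ^ 2 := Finset.sum_le_sum step
      _ = (WS W₀).card * ∑ v ∈ WS W, (Aden W' X (v + i)) ^ 2 := sums
  exact le_of_mul_le_mul_left total hc0

section Split
variable {W : Submodule (ZMod 2) (Vec n)} {r v₀ : Vec n}

lemma zmod2_ne_zero {a : ZMod 2} (h : a ≠ 0) : a = 1 := by revert h; revert a; decide

lemma mem_ker_iff {x : Vec n} : x ∈ LinearMap.ker (phi r) ↔ bform x r = 0 := by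
  rw [LinearMap.mem_ker]; rfl

lemma split_gain (hv₀ : v₀ ∈ W) (hbr : bform v₀ r ≠ 0) (X : Set (Vec n)) (i : Vec n) :
    ((WS W).card : ℝ) * ((Aden W X i) ^ 2 + (Ssum W X i r / (WS W).card) ^ 2)
      = ∑ v ∈ WS W, (Aden (W ⊓ LinearMap.ker (phi r)) X (v + i)) ^ 2 := by
  set W₀ := W ⊓ LinearMap.ker (phi r) with hW₀
  have hsub : WS W₀ ⊆ WS W := fun v hv => mem_WS.2 (mem_WS.1 hv).1
  set D : Finset (Vec n) := WS W \ WS W₀ with hD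
  have memD : ∀ v, v ∈ D ↔ v ∈ W ∧ bform v r = 1 := by
    intro v
    simp only [hD, Finset.mem_sdiff, mem_WS, hW₀, Submodule.mem_inf, mem_ker_iff]
    constructor
    · rintro ⟨hvW, hv⟩
      exact ⟨hvW, zmod2_ne_zero (fun h0 => hv ⟨hvW, h0⟩)⟩
    · rintro ⟨hvW, hv1⟩
      exact ⟨hvW, fun h => by rw [hv1] at h; exact one_ne_zero h.2⟩
  have memW₀ : ∀ v, v ∈ WS W₀ ↔ v ∈ W ∧ bform v r = 0 := by
    intro v
    simp only [mem_WS, hW₀, Submodule.mem_inf, mem_ker_iff]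
  have hbr1 : bform v₀ r = 1 := zmod2_ne_zero hbr
  have card_D : D.card = (WS W₀).card := by
    apply Finset.card_bij (fun v _ => v₀ + v)
    · intro a ha
      rcases (memD a).1 ha with ⟨haW, har⟩
      refine (memW₀ _).2 ⟨W.add_mem hv₀ haW, ?_⟩
      rw [bform_add_left, hbr1, har]; decide
    · intro a ha b hb hab
      have h3 : a = v₀ + (v₀ + a) := by rw [← add_assoc, two_torsion, zero_add]
      rw [h3, hab, ← add_assoc, two_torsion, zero_add]
    · intro b hb
      rcases (memW₀ b).1 hb with ⟨hbW, hbr0⟩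
      refine ⟨v₀ + b, (memD _).2 ⟨W.add_mem hv₀ hbW, ?_⟩, ?_⟩
      · rw [bform_add_left, hbr1, hbr0]; decide
      · rw [← add_assoc, two_torsion, zero_add]
  have card_split : ((WS W).card : ℝ) = 2 * (WS W₀).card := by
    have : (WS W).card = D.card + (WS W₀).card := by
      rw [hD]; rw [Finset.card_sdiff_add_card_eq_card hsub]
    rw [this, card_D]; push_cast; ring
  set N : ℝ := ∑ v ∈ D, ind X (v + i) with hN
  have asum_split : Asum W X i = Asum W₀ X i + N := by
    rw [Asum, ← Finset.sum_sdiff hsub, hN]; rw [add_comm]; rfl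
  have ssum_split : Ssum W X i r = Asum W₀ X i - N := by
    rw [Ssum, ← Finset.sum_sdiff hsub]
    have h1 : ∑ v ∈ WS W \ WS W₀, ind X (v + i) * (-1 : ℝ) ^ (bform v r).val = -N := by
      rw [hN, ← Finset.sum_neg_distrib]
      refine Finset.sum_congr rfl fun v hv => ?_
      rw [((memD v).1 hv).2, (show ((1:ZMod 2)).val = 1 from rfl)]
      ring
    have h2 : ∑ v ∈ WS W₀, ind X (v + i) * (-1 : ℝ) ^ (bform v r).val = Asum W₀ X i := by
      refine Finset.sum_congr rfl fun v hv => ?_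
      rw [((memW₀ v).1 hv).2, (show ((0:ZMod 2)).val = 0 from rfl)]
      ring
    rw [h1, h2]; ring
  have val0 : ∀ v ∈ WS W₀, Asum W₀ X (v + i) = Asum W₀ X i := by
    intro v hv
    have key : ∑ w ∈ WS W₀, ind X (w + (v + i)) = ∑ w ∈ WS W₀, ind X (w + i) := by
      have := (fun g => Finset.sum_congr rfl g :
        (∀ w ∈ WS W₀, ind X (w + (v+i)) = ind X ((w+v) + i)) →
          ∑ w ∈ WS W₀, ind X (w + (v + i)) = ∑ w ∈ WS W₀, ind X ((w + v) + i))
        (fun w _ => by rw [add_assoc])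
      rw [this]
      apply Finset.sum_nbij' (fun w => w + v) (fun w => w + v)
      · intro a ha
        rcases (memW₀ a).1 ha with ⟨haW, har⟩
        refine (memW₀ _).2 ⟨W.add_mem haW (mem_WS.1 hv).1, ?_⟩
        rw [bform_add_left, har, ((memW₀ v).1 hv).2]; decide
      · intro a ha
        rcases (memW₀ a).1 ha with ⟨haW, har⟩
        refine (memW₀ _).2 ⟨W.add_mem haW (mem_WS.1 hv).1, ?_⟩
        rw [bform_add_left, har, ((memW₀ v).1 hv).2]; decide
      · intro a _; rw [add_assoc, two_torsion, add_zero]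
      · intro a _; rw [add_assoc, two_torsion, add_zero]
      · intro a _; rfl
    exact key
  have val1 : ∀ v ∈ D, Asum W₀ X (v + i) = N := by
    intro v hv
    rcases (memD v).1 hv with ⟨hvW, hvr⟩
    have step1 : Asum W₀ X (v + i) = ∑ w ∈ WS W₀, ind X ((w + v) + i) := by
      refine Finset.sum_congr rfl fun w _ => by rw [add_assoc]
    rw [step1, hN]
    apply Finset.sum_nbij' (fun w => w + v) (fun w => w + v)
    · intro a ha
      rcases (memW₀ a).1 ha with ⟨haW, har⟩
      refine (memD _).2 ⟨W.add_mem haW hvW, ?_⟩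
      rw [bform_add_left, har, hvr]; decide
    · intro a ha
      rcases (memD a).1 ha with ⟨haW, har⟩
      refine (memW₀ _).2 ⟨W.add_mem haW hvW, ?_⟩
      rw [bform_add_left, har, hvr]; decide
    · intro a _; rw [add_assoc, two_torsion, add_zero]
    · intro a _; rw [add_assoc, two_torsion, add_zero]
    · intro a _; rfl
  have hc0 : (0 : ℝ) < (WS W₀).card := by exact_mod_cast card_WS_pos W₀
  have sum_eval : ∑ v ∈ WS W, (Aden W₀ X (v + i)) ^ 2
      = (WS W₀).card * ((Asum W₀ X i / (WS W₀).card) ^ 2 + (N / (WS W₀).card) ^ 2) := by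
    rw [← Finset.sum_sdiff hsub]
    have e1 : ∑ v ∈ WS W \ WS W₀, (Aden W₀ X (v + i)) ^ 2
        = (WS W₀).card * (N / (WS W₀).card) ^ 2 := by
      rw [← hD]
      have : ∀ v ∈ D, (Aden W₀ X (v + i)) ^ 2 = (N / (WS W₀).card) ^ 2 := by
        intro v hv; rw [Aden, val1 v hv]
      rw [Finset.sum_congr rfl this, Finset.sum_const, card_D, nsmul_eq_mul]
    have e2 : ∑ v ∈ WS W₀, (Aden W₀ X (v + i)) ^ 2
        = (WS W₀).card * (Asum W₀ X i / (WS W₀).card) ^ 2 := by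
      have : ∀ v ∈ WS W₀, (Aden W₀ X (v + i)) ^ 2 = (Asum W₀ X i / (WS W₀).card) ^ 2 := by
        intro v hv; rw [Aden, val0 v hv]
      rw [Finset.sum_congr rfl this, Finset.sum_const, nsmul_eq_mul]
    rw [e1, e2]; ring
  rw [sum_eval, Aden, asum_split, ssum_split, card_split]
  field_simp
  ring
end Split

/-- sign rule for translating `Ssum` by an element of `W`. -/
lemma neg_one_pow_add (a b : ZMod 2) :
    (-1:ℝ)^((a+b).val) = (-1:ℝ)^a.val * (-1:ℝ)^b.val := by
  obtain rfl | rfl : a = 0 ∨ a = 1 := by revert a; decide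
  all_goals obtain rfl | rfl : b = 0 ∨ b = 1 := by revert b; decide
  all_goals
    norm_num [show ((1:ZMod 2) + 1).val = 0 from rfl, show ((2:ZMod 2)).val = 0 from rfl, show ((1:ZMod 2)).val = 1 from rfl]

lemma Ssum_transl {W : Submodule (ZMod 2) (Vec n)} {u : Vec n} (hu : u ∈ W)
    (X : Set (Vec n)) (i r : Vec n) :
    Ssum W X (u + i) r = (-1:ℝ)^((bform u r).val) * Ssum W X i r := by
  rw [Ssum, Ssum, Finset.mul_sum]
  apply Finset.sum_nbij' (fun v => u + v) (fun v => u + v)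
  · intro a ha
    exact mem_WS.2 (W.add_mem hu (mem_WS.1 ha))
  · intro a ha
    exact mem_WS.2 (W.add_mem hu (mem_WS.1 ha))
  · intro a _
    rw [← add_assoc, two_torsion, zero_add]
  · intro a _
    rw [← add_assoc, two_torsion, zero_add]
  · intro a _
    have h4 : (-1:ℝ)^((bform u r).val) * (-1:ℝ)^((bform u r).val) = 1 := by
      rw [← pow_add]
      exact Even.neg_one_pow ⟨(bform u r).val, rfl⟩
    rw [show a + (u + i) = (u + a) + i by
      rw [← add_assoc, add_comm a u], bform_add_left, neg_one_pow_add]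
    linear_combination (-(ind X ((u + a) + i) * (-1:ℝ)^((bform a r).val))) * h4

lemma abs_fourier_transl {W : Submodule (ZMod 2) (Vec n)} {u : Vec n} (hu : u ∈ W)
    (X : Set (Vec n)) (i r : Vec n) :
    |fourierAvg W X (u + i) r| = |fourierAvg W X i r| := by
  rw [fourierAvg_eq, fourierAvg_eq, Ssum_transl hu, abs_div, abs_div, abs_mul]
  rw [abs_pow, abs_neg, abs_one, one_pow, one_mul]

lemma isRegular_transl {W : Submodule (ZMod 2) (Vec n)} {u : Vec n} (hu : u ∈ W)
    (X : Set (Vec n)) (ε : ℝ) (i : Vec n) :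
    IsRegularValue W X ε (u + i) ↔ IsRegularValue W X ε i := by
  unfold IsRegularValue
  constructor <;> intro h r hr
  · rw [← abs_fourier_transl hu X i r]; exact h r hr
  · rw [abs_fourier_transl hu X i r]; exact h r hr

/-- rank bound for intersecting with one kernel. -/
lemma finrank_inf_ker (V : Submodule (ZMod 2) (Vec n)) (r : Vec n) :
    Module.finrank (ZMod 2) V
      ≤ Module.finrank (ZMod 2) (V ⊓ LinearMap.ker (phi r) : Submodule (ZMod 2) (Vec n)) + 1 := by
  have hsum := Submodule.finrank_sup_add_finrank_inf_eq V (LinearMap.ker (phi r))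
  have hrn := LinearMap.finrank_range_add_finrank_ker (phi r)
  have hrange : Module.finrank (ZMod 2) (LinearMap.range (phi r)) ≤ 1 := by
    have := Submodule.finrank_le (LinearMap.range (phi r))
    simpa [Module.finrank_self] using this
  have htot : Module.finrank (ZMod 2) (Vec n) = n := by
    rw [Module.finrank_fintype_fun_eq_card, Fintype.card_fin]
  have hsup : Module.finrank (ZMod 2) (V ⊔ LinearMap.ker (phi r) : Submodule (ZMod 2) (Vec n)) ≤ n :=
    le_trans (Submodule.finrank_le _) (le_of_eq htot)
  omega

lemma finrank_inf_iInf (T : Finset (Vec n)) (V : Submodule (ZMod 2) (Vec n)) :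
    Module.finrank (ZMod 2) V
      ≤ Module.finrank (ZMod 2) ((V ⊓ ⨅ r ∈ T, LinearMap.ker (phi r)) : Submodule (ZMod 2) (Vec n))
        + T.card := by
  classical
  induction T using Finset.induction_on with
  | empty =>
      have h0 : (⨅ r ∈ (∅ : Finset (Vec n)), LinearMap.ker (phi r)) = ⊤ := by simp
      rw [h0, inf_top_eq]
      simp
  | @insert a T ha ih =>
      have hins : (⨅ r ∈ insert a T, LinearMap.ker (phi r))
          = LinearMap.ker (phi a) ⊓ ⨅ r ∈ T, LinearMap.ker (phi r) := by
        rw [Finset.iInf_insert]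
      have hre : V ⊓ (⨅ r ∈ insert a T, LinearMap.ker (phi r))
          = (V ⊓ ⨅ r ∈ T, LinearMap.ker (phi r)) ⊓ LinearMap.ker (phi a) := by
        rw [hins]
        rw [inf_comm (LinearMap.ker (phi a)) _, inf_assoc]
      rw [hre, Finset.card_insert_of_notMem ha]
      have step := finrank_inf_ker (V ⊓ ⨅ r ∈ T, LinearMap.ker (phi r)) a
      omega


section Increment
variable (X : Set (Vec n)) (ε : ℝ)

open Classical in
def Bfin (W : Submodule (ZMod 2) (Vec n)) : Finset (Vec n) :=
  Finset.univ.filter (fun i => ¬ IsRegularValue W X ε i)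

lemma card_Bfin (W : Submodule (ZMod 2) (Vec n)) :
    (Nat.card {i : Vec n | ¬ IsRegularValue W X ε i}) = (Bfin X ε W).card := by
  classical
  rw [Nat.card_coe_set_eq, Set.ncard_eq_toFinset_card']
  simp [Bfin, Set.toFinset_setOf]

lemma finrank_le_n (W : Submodule (ZMod 2) (Vec n)) : Module.finrank (ZMod 2) W ≤ n := by
  have htot : Module.finrank (ZMod 2) (Vec n) = n := by
    rw [Module.finrank_fintype_fun_eq_card, Fintype.card_fin]
  exact le_trans (Submodule.finrank_le W) (le_of_eq htot)

lemma increment (hε : 0 < ε) (W : Submodule (ZMod 2) (Vec n))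
    (hbad : ε * 2 ^ n ≤ ((Bfin X ε W).card : ℝ)) :
    ∃ W' : Submodule (ZMod 2) (Vec n),
      Module.finrank (ZMod 2) W
        ≤ Module.finrank (ZMod 2) W' + 2 ^ (n - Module.finrank (ZMod 2) W) ∧
      En W X + ε ^ 3 * 2 ^ n ≤ En W' X := by
  classical
  letI : Fintype (Vec n ⧸ W) := Fintype.ofFinite _
  set pick : (Vec n ⧸ W) → Vec n := fun c =>
    if h : ∃ r, (∃ v ∈ W, bform v r ≠ 0) ∧ ε < |fourierAvg W X (Quotient.out c) r|
    then h.choose else 0 with hpick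
  have hout : ∀ i : Vec n, ∃ u ∈ W,
      Quotient.out (Submodule.Quotient.mk (p := W) i) = u + i := by
    intro i
    set c := Submodule.Quotient.mk (p := W) i with hc
    have h1 : Submodule.Quotient.mk (p := W) (Quotient.out c) = c := Quotient.out_eq c
    have h2 : Quotient.out c - i ∈ W := (Submodule.Quotient.eq W).1 (h1.trans hc)
    exact ⟨Quotient.out c - i, h2, by rw [sub_add_cancel]⟩
  have hwitness : ∀ i ∈ Bfin X ε W,
      (∃ v ∈ W, bform v (pick (Submodule.Quotient.mk (p := W) i)) ≠ 0) ∧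
        ε < |fourierAvg W X i (pick (Submodule.Quotient.mk (p := W) i))| := by
    intro i hi
    have hbadi : ¬ IsRegularValue W X ε i := by
      simpa [Bfin] using hi
    obtain ⟨u, hu, huo⟩ := hout i
    have habs : ∀ r, |fourierAvg W X (Quotient.out (Submodule.Quotient.mk (p := W) i)) r|
        = |fourierAvg W X i r| := by
      intro r
      rw [huo]
      exact abs_fourier_transl hu X i r
    have hex : ∃ r, (∃ v ∈ W, bform v r ≠ 0) ∧
        ε < |fourierAvg W X (Quotient.out (Submodule.Quotient.mk (p := W) i)) r| := by
      rw [IsRegularValue] at hbadi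
      push_neg at hbadi
      obtain ⟨r, hr1, hr2⟩ := hbadi
      exact ⟨r, hr1, by rw [habs r]; exact hr2⟩
    have := hex.choose_spec
    rw [hpick]
    simp only [dif_pos hex]
    exact ⟨this.1, by rw [← habs]; exact this.2⟩
  set T : Finset (Vec n) := Finset.image pick Finset.univ with hT
  set W' : Submodule (ZMod 2) (Vec n) := W ⊓ ⨅ r ∈ T, LinearMap.ker (phi r) with hW'
  have hW'le : W' ≤ W := inf_le_left
  have hTcard : T.card ≤ 2 ^ (n - Module.finrank (ZMod 2) W) := by
    have h1 : T.card ≤ Fintype.card (Vec n ⧸ W) := by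
      calc T.card ≤ Finset.univ.card := Finset.card_image_le
        _ = Fintype.card (Vec n ⧸ W) := Finset.card_univ
    have h2 : Fintype.card (Vec n ⧸ W) = 2 ^ Module.finrank (ZMod 2) (Vec n ⧸ W) := by
      have := Module.card_eq_pow_finrank (K := ZMod 2) (V := Vec n ⧸ W)
      rwa [ZMod.card 2] at this
    have h3 : Module.finrank (ZMod 2) (Vec n ⧸ W) + Module.finrank (ZMod 2) W
        = Module.finrank (ZMod 2) (Vec n) := Submodule.finrank_quotient_add_finrank W
    have htot : Module.finrank (ZMod 2) (Vec n) = n := by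
      rw [Module.finrank_fintype_fun_eq_card, Fintype.card_fin]
    have h4 : Module.finrank (ZMod 2) (Vec n ⧸ W) = n - Module.finrank (ZMod 2) W := by
      omega
    rw [h2, h4] at h1
    exact h1
  refine ⟨W', ?_, ?_⟩
  · have := finrank_inf_iInf T W
    rw [← hW'] at this
    omega
  · -- energy increment
    have hcW : (0 : ℝ) < (WS W).card := by exact_mod_cast card_WS_pos W
    have key2 : ∀ i : Vec n, (WS W).card * (Aden W X i) ^ 2
        ≤ ∑ v ∈ WS W, (Aden W' X (v + i)) ^ 2 := fun i => cs_pointwise hW'le X i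
    have key : ∀ i ∈ Bfin X ε W,
        (WS W).card * ((Aden W X i) ^ 2 + ε ^ 2) ≤ ∑ v ∈ WS W, (Aden W' X (v + i)) ^ 2 := by
      intro i hi
      obtain ⟨⟨v₀, hv₀W, hv₀r⟩, hbig⟩ := hwitness i hi
      set r := pick (Submodule.Quotient.mk (p := W) i) with hr
      have hmem : r ∈ T := by
        rw [hT]
        exact Finset.mem_image_of_mem pick (Finset.mem_univ _)
      have hW0le : W' ≤ W ⊓ LinearMap.ker (phi r) := by
        refine le_inf inf_le_left (le_trans inf_le_right ?_)
        exact iInf_le_of_le r (iInf_le _ hmem)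
      have hgain := split_gain hv₀W hv₀r X i
      have hmono := local_mono hW0le inf_le_left X i
      have hsq : ε ^ 2 ≤ (Ssum W X i r / (WS W).card) ^ 2 := by
        rw [fourierAvg_eq] at hbig
        have h5 : ε ≤ |Ssum W X i r / (WS W).card| := le_of_lt hbig
        calc ε ^ 2 ≤ |Ssum W X i r / (WS W).card| ^ 2 := by
              exact pow_le_pow_left₀ (le_of_lt hε) h5 2
          _ = (Ssum W X i r / (WS W).card) ^ 2 := sq_abs _
      calc (WS W).card * ((Aden W X i) ^ 2 + ε ^ 2)
          ≤ (WS W).card * ((Aden W X i) ^ 2 + (Ssum W X i r / (WS W).card) ^ 2) := by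
            apply mul_le_mul_of_nonneg_left _ (le_of_lt hcW)
            linarith
        _ = ∑ v ∈ WS W, (Aden (W ⊓ LinearMap.ker (phi r)) X (v + i)) ^ 2 := hgain
        _ ≤ ∑ v ∈ WS W, (Aden W' X (v + i)) ^ 2 := hmono
    have total : (WS W).card * En W X + (Bfin X ε W).card * ((WS W).card * ε ^ 2)
        ≤ (WS W).card * En W' X := by
      rw [← double_count W W' X]
      have hsplit : ∑ i : Vec n, ∑ v ∈ WS W, (Aden W' X (v + i)) ^ 2
          = (∑ i ∈ Finset.univ \ Bfin X ε W, ∑ v ∈ WS W, (Aden W' X (v + i)) ^ 2)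
            + ∑ i ∈ Bfin X ε W, ∑ v ∈ WS W, (Aden W' X (v + i)) ^ 2 :=
        (Finset.sum_sdiff (Finset.subset_univ _)).symm
      have hEsplit : (WS W).card * En W X
          = (∑ i ∈ Finset.univ \ Bfin X ε W, (WS W).card * (Aden W X i) ^ 2)
            + ∑ i ∈ Bfin X ε W, (WS W).card * (Aden W X i) ^ 2 := by
        rw [En, Finset.mul_sum]
        exact (Finset.sum_sdiff (Finset.subset_univ _)).symm
      have hb1 : ∑ i ∈ Finset.univ \ Bfin X ε W, (WS W).card * (Aden W X i) ^ 2
          ≤ ∑ i ∈ Finset.univ \ Bfin X ε W, ∑ v ∈ WS W, (Aden W' X (v + i)) ^ 2 :=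
        Finset.sum_le_sum fun i _ => key2 i
      have hb2 : (∑ i ∈ Bfin X ε W, (WS W).card * (Aden W X i) ^ 2)
            + (Bfin X ε W).card * ((WS W).card * ε ^ 2)
          ≤ ∑ i ∈ Bfin X ε W, ∑ v ∈ WS W, (Aden W' X (v + i)) ^ 2 := by
        have : ∑ i ∈ Bfin X ε W, ((WS W).card * (Aden W X i) ^ 2 + (WS W).card * ε ^ 2)
            ≤ ∑ i ∈ Bfin X ε W, ∑ v ∈ WS W, (Aden W' X (v + i)) ^ 2 := by
          refine Finset.sum_le_sum fun i hi => ?_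
          have := key i hi
          linarith [key i hi, mul_add ((WS W).card : ℝ) ((Aden W X i) ^ 2) (ε ^ 2)]
        rw [Finset.sum_add_distrib, Finset.sum_const, nsmul_eq_mul] at this
        linarith
      rw [hsplit, hEsplit]
      linarith
    have hdiv : En W X + (Bfin X ε W).card * ε ^ 2 ≤ En W' X := by
      have h6 : (WS W).card * (En W X + (Bfin X ε W).card * ε ^ 2)
          ≤ (WS W).card * En W' X := by
        calc (WS W).card * (En W X + (Bfin X ε W).card * ε ^ 2)
            = (WS W).card * En W X + (Bfin X ε W).card * ((WS W).card * ε ^ 2) := by ring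
          _ ≤ (WS W).card * En W' X := total
      exact le_of_mul_le_mul_left h6 hcW
    have h7 : ε ^ 3 * 2 ^ n ≤ (Bfin X ε W).card * ε ^ 2 := by
      have h8 : (ε * 2 ^ n) * ε ^ 2 ≤ ((Bfin X ε W).card : ℝ) * ε ^ 2 :=
        mul_le_mul_of_nonneg_right hbad (sq_nonneg ε)
      calc ε ^ 3 * 2 ^ n = (ε * 2 ^ n) * ε ^ 2 := by ring
        _ ≤ ((Bfin X ε W).card : ℝ) * ε ^ 2 := h8
    linarith

end Increment

def gB : ℕ → ℕ
  | 0 => 0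
  | (m + 1) => gB m + 2 ^ gB m

lemma iterate_lemma (X : Set (Vec n)) (ε : ℝ) (hε : 0 < ε) (m : ℕ) :
    ∃ W : Submodule (ZMod 2) (Vec n),
      n - Module.finrank (ZMod 2) W ≤ gB m ∧
      (((Bfin X ε W).card : ℝ) < ε * 2 ^ n ∨ (m : ℝ) * (ε ^ 3 * 2 ^ n) ≤ En W X) := by
  induction m with
  | zero =>
      refine ⟨⊤, ?_, Or.inr ?_⟩
      · have : Module.finrank (ZMod 2) (⊤ : Submodule (ZMod 2) (Vec n)) = n := by
          rw [finrank_top, Module.finrank_fintype_fun_eq_card, Fintype.card_fin]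
        simp [this, gB]
      · simpa using En_nonneg ⊤ X
  | succ m ih =>
      obtain ⟨W, hcodim, hdisj⟩ := ih
      by_cases hgood : ((Bfin X ε W).card : ℝ) < ε * 2 ^ n
      · refine ⟨W, le_trans hcodim ?_, Or.inl hgood⟩
        show gB m ≤ gB m + 2 ^ gB m
        exact Nat.le_add_right _ _
      · have hbad : ε * 2 ^ n ≤ ((Bfin X ε W).card : ℝ) := le_of_not_gt hgood
        have hen : (m : ℝ) * (ε ^ 3 * 2 ^ n) ≤ En W X := by
          rcases hdisj with h | h
          · exact absurd h hgood
          · exact h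
        obtain ⟨W', hrank, hgain⟩ := increment X ε hε W hbad
        refine ⟨W', ?_, Or.inr ?_⟩
        · have hfl := finrank_le_n W
          have hfl' := finrank_le_n W'
          have hpow : 2 ^ (n - Module.finrank (ZMod 2) W) ≤ 2 ^ gB m :=
            Nat.pow_le_pow_right (by norm_num) hcodim
          show n - Module.finrank (ZMod 2) W' ≤ gB m + 2 ^ gB m
          omega
        · push_cast
          push_cast at hen
          linarith

end Reg
end

theorem regularity_lemma (ε : ℝ) (hε : 0 < ε) (hε2 : ε < 1 / 2) :
    ∃ C : ℕ, ∀ (n : ℕ) (X : Set (Vec n)),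
      ∃ W : Submodule (ZMod 2) (Vec n),
        n - Module.finrank (ZMod 2) W ≤ C ∧
        (Nat.card {i : Vec n | ¬ IsRegularValue W X ε i} : ℝ) < ε * 2 ^ n := by
  set m : ℕ := ⌈1 / ε ^ 3⌉₊ + 1 with hm
  refine ⟨Reg.gB m, fun n X => ?_⟩
  obtain ⟨W, hcodim, hdisj⟩ := Reg.iterate_lemma X ε hε m
  refine ⟨W, hcodim, ?_⟩
  rw [Reg.card_Bfin X ε W]
  rcases hdisj with h | h
  · exact h
  · exfalso
    have hE := Reg.En_le W X
    have hε3 : (0:ℝ) < ε ^ 3 := by positivity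
    have h1 : (1 / ε ^ 3 : ℝ) < m := by
      rw [hm]; push_cast
      have := Nat.le_ceil (1 / ε ^ 3)
      linarith
    have h2 : (1 : ℝ) < m * ε ^ 3 := by
      rw [div_lt_iff₀ hε3] at h1
      linarith
    have hp : (0:ℝ) < 2 ^ n := by positivity
    nlinarith [mul_lt_mul_of_pos_right h2 hp]
end
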